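/- For every p > 0 with p ≠ 2 and every z ∈ (0, 1): (1 − z)^{p/2 + 1}/(p/2 + 1) · ₂F₁( p/4 + 1/2, p/4; 3/2; z² ) = ( (1/8) / ( (p/4 − 1/2)·(p/4 + 1/2) ) ) · ( (1 − z)²/z ) · [ 1 − ((1 − z)/(1 + z))^{p/2 − 1} ]. -/

import Mathlib

/-- The Pochhammer rising factorial `(a)ₙ = a (a+1) ⋯ (a+n-1)`. -/
noncomputable def poch (a : ℝ) : ℕ → ℝ
  | 0 => 1
  | n + 1 => poch a n * (a + n)

/-- The Gauss hypergeometric function `₂F₁(a, b; c; x)`, defined for `|x| < 1`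
by the convergent power series `∑ (a)ₙ (b)ₙ / (c)ₙ · xⁿ/n!`. -/
noncomputable def hyp2F1 (a b c x : ℝ) : ℝ :=
  ∑' n : ℕ, poch a n * poch b n / poch c n * x ^ n / (Nat.factorial n : ℝ)

/-!
With `s = 1 - p/2`, the odd binomial coefficients are `C(s, 2n+1) = s (p/4+1/2)ₙ (p/4)ₙ / ((3/2)ₙ n!)`,
so the hypergeometric series is the odd part of the binomial series of `(1+z)^s`:
`₂F₁(p/4+1/2, p/4; 3/2; z²) = ((1+z)^s - (1-z)^s) / (2 s z)`.
Multiplying by `(1-z)^(p/2+1)` and collecting powers of `1 - z` and `1 + z` gives the closed form.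
-/

theorem Real.hasSum_choose_mul_pow (a : ℝ) {x : ℝ} (hx : |x| < 1) :
    HasSum (fun n ↦ Ring.choose a n * x ^ n) ((1 + x) ^ a) := by
  have hx' : x ∈ Metric.eball (0 : ℝ) 1 := by
    simpa [Metric.mem_eball, edist_dist, Real.dist_eq] using hx
  simpa [binomialSeries, FormalMultilinearSeries.coeff_ofScalars, mul_comm] using
    Real.one_add_rpow_hasFPowerSeriesOnBall_zero.hasSum hx'

theorem Ring.choose_succ_eq_div {𝕂 : Type*} [Field 𝕂] [CharZero 𝕂] (a : 𝕂) (n : ℕ) :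
    Ring.choose a (n + 1) = Ring.choose a n * (a - n) / (n + 1) := by
  simp only [Ring.choose_eq_smul, smul_eq_mul, ← Polynomial.aeval_eq_smeval,
    descPochhammer_succ_right, map_mul, map_sub, Polynomial.aeval_X, map_natCast,
    Nat.factorial_succ]
  push_cast
  field_simp

theorem HasSum.sub_odd_terms {R : Type*} [CommRing R] [TopologicalSpace R] [IsTopologicalAddGroup R]
    {c : ℕ → R} {x A B : R} (hA : HasSum (fun n ↦ c n * x ^ n) A)
    (hplus : HasSum (fun n ↦ c n * (-x) ^ n) B) :
    HasSum (fun n ↦ 2 * (c (2 * n + 1) * x ^ (2 * n + 1))) (A - B) := by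
  have hodd : Function.Injective (fun n : ℕ ↦ 2 * n + 1) := fun m n h ↦ by simpa using h
  refine (hodd.hasSum_iff fun m hm ↦ ?_).mpr (hA.sub hplus) |>.congr_fun fun n ↦ ?_
  · have heven : Even m := by
      by_contra h
      obtain ⟨k, rfl⟩ := Nat.not_even_iff_odd.mp h
      exact hm ⟨k, rfl⟩
    simp [heven.neg_pow]
  · simp [(odd_two_mul_add_one n).neg_pow]
    ring

lemma poch_succ (a : ℝ) (n : ℕ) : poch a (n + 1) = poch a n * (a + n) := rfl

lemma poch_pos {a : ℝ} (ha : 0 < a) (n : ℕ) : 0 < poch a n := by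
  induction n with
  | zero => exact one_pos
  | succ n ih => exact mul_pos ih (by positivity)

lemma choose_one_sub_two_mul_odd_eq_poch (a : ℝ) (n : ℕ) :
    Ring.choose (1 - 2 * a) (2 * n + 1) =
      (1 - 2 * a) * (poch (a + 1 / 2) n * poch a n / poch (3 / 2) n / n.factorial) := by
  induction n with
  | zero => simp [poch]
  | succ n ih =>
    have hpoch := (poch_pos (by norm_num : (0 : ℝ) < 3 / 2) n).ne'
    rw [show 2 * (n + 1) + 1 = 2 * n + 1 + 1 + 1 by ring, Ring.choose_succ_eq_div,
      Ring.choose_succ_eq_div, ih, poch_succ, poch_succ, poch_succ, Nat.factorial_succ]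
    push_cast
    field_simp
    ring

theorem hyp2F1_add_half_three_halves_sq (a : ℝ) {z : ℝ} (hz₀ : z ≠ 0) (hz₁ : |z| < 1)
    (ha : 1 - 2 * a ≠ 0) :
    hyp2F1 (a + 1 / 2) a (3 / 2) (z ^ 2) =
      ((1 + z) ^ (1 - 2 * a) - (1 - z) ^ (1 - 2 * a)) / (2 * (1 - 2 * a) * z) := by
  have hsum := (Real.hasSum_choose_mul_pow (1 - 2 * a) hz₁).sub_odd_terms
    (Real.hasSum_choose_mul_pow (1 - 2 * a) (x := -z) (by rwa [abs_neg]))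
  rw [← sub_eq_add_neg] at hsum
  rw [hyp2F1, eq_div_iff (by positivity), mul_comm, ← tsum_mul_left]
  refine (hsum.congr_fun fun n ↦ ?_).tsum_eq
  rw [choose_one_sub_two_mul_odd_eq_poch, ← pow_mul, pow_succ z (2 * n)]
  ring

/-- **Elementary closed form of `F_{p,1}`:** for `p > 0`, `p ≠ 2` and `z ∈ (0,1)`,
`(1-z)^{p/2+1}/(p/2+1) · ₂F₁(p/4+1/2, p/4; 3/2; z²)
  = (1/8)/((p/4-1/2)(p/4+1/2)) · ((1-z)²/z) · [1 - ((1-z)/(1+z))^{p/2-1}]`. -/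
theorem hyp2F1_q_one_closed_form
    (p : ℝ) (hp : 0 < p) (hp2 : p ≠ 2) (z : ℝ) (hz : z ∈ Set.Ioo (0:ℝ) 1) :
    (1 - z) ^ (p / 2 + 1) / (p / 2 + 1) *
        hyp2F1 (p / 4 + 1 / 2) (p / 4) (3 / 2) (z ^ 2) =
      ((1 / 8) / ((p / 4 - 1 / 2) * (p / 4 + 1 / 2))) * ((1 - z) ^ 2 / z) *
        (1 - ((1 - z) / (1 + z)) ^ (p / 2 - 1)) := by
  obtain ⟨hz₀, hz₁⟩ := hz
  have hzm : 0 < 1 - z := by linarith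
  have hzp : 0 < 1 + z := by linarith
  have hs : 1 - 2 * (p / 4) ≠ 0 := fun h ↦ hp2 (by linarith)
  have hminus : (1 - z) ^ (p / 2 + 1) * (1 - z) ^ (1 - 2 * (p / 4)) = (1 - z) ^ 2 := by
    rw [← Real.rpow_add hzm, show p / 2 + 1 + (1 - 2 * (p / 4)) = 2 by ring, Real.rpow_two]
  have hplus : (1 - z) ^ (p / 2 + 1) * (1 + z) ^ (1 - 2 * (p / 4)) =
      (1 - z) ^ 2 * ((1 - z) / (1 + z)) ^ (p / 2 - 1) := by
    rw [show p / 2 + 1 = 2 + (p / 2 - 1) by ring, Real.rpow_add hzm, Real.rpow_two,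
      show 1 - 2 * (p / 4) = -(p / 2 - 1) by ring, Real.rpow_neg hzp.le,
      Real.div_rpow hzm.le hzp.le]
    ring
  rw [hyp2F1_add_half_three_halves_sq (p / 4) hz₀.ne' (by rw [abs_of_pos hz₀]; exact hz₁) hs,
    div_mul_div_comm, mul_sub, hplus, hminus]
  generalize ((1 - z) / (1 + z)) ^ (p / 2 - 1) = D
  field_simp
  rw [div_eq_div_iff (fun h ↦ hp2 (by linarith)) (fun h ↦ hp2 (by linarith))]
  ring
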